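/- arXiv:2303.13751 — 4 statements merged into one kernel-verified Lean document; each statement's English description precedes it below -/
import Mathlib

section
/- Fix an integer k ≥ 1 and a real x with x² ≠ 1. On the affine curve w^{k+1} = z^k(z² − 1) (away from z ∈ {0, ±1, ±x}), the meromorphic 1-form η = (z² − x²)² w/(z² − 1)³ dz satisfies η = ((4k+3−2x²−x⁴)/(4k)) · (w/(z²−1)) dz − ((k+1)(1−x²)²/(2(2k+1))) · d(zw/(z²−1)²) − ((k+1)(1−x²)(3+x²)/(4k)) · d(zw/(z²−1)). -/
set_option maxHeartbeats 2000000


theorem stmt_6 (k : ℕ) (hk : 1 ≤ k) (x : ℝ) (hx : x^2 ≠ 1)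
    (z : ℂ) (hz0 : z ≠ 0) (hz1 : z ≠ 1) (hzm1 : z ≠ -1) (hzx : z^2 ≠ (x:ℂ)^2)
    (w : ℂ → ℂ)
    (hw : w z ^ (k+1) = z^k * (z^2 - 1))
    (hw' : HasDerivAt w (w z / (k+1) * ((k:ℂ)/z + 2*z/(z^2 - 1))) z)
    (d₁ d₂ : ℂ)
    (hd₁ : HasDerivAt (fun s => s * w s / (s^2 - 1)^2) d₁ z)
    (hd₂ : HasDerivAt (fun s => s * w s / (s^2 - 1)) d₂ z) :
    (z^2 - (x:ℂ)^2)^2 * w z / (z^2 - 1)^3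
      = ((4*(k:ℂ) + 3 - 2*(x:ℂ)^2 - (x:ℂ)^4) / (4*(k:ℂ))) * (w z / (z^2 - 1))
        - (((k:ℂ)+1)*(1 - (x:ℂ)^2)^2 / (2*(2*(k:ℂ)+1))) * d₁
        - (((k:ℂ)+1)*(1 - (x:ℂ)^2)*(3 + (x:ℂ)^2) / (4*(k:ℂ))) * d₂ := by
  have hzz : z^2 - 1 ≠ 0 := by
    intro h
    have : (z - 1) * (z + 1) = 0 := by linear_combination h
    rcases mul_eq_zero.1 this with h' | h'
    · exact hz1 (sub_eq_zero.1 h')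
    · exact hzm1 (eq_neg_of_add_eq_zero_left h')
  have hk0 : (k:ℂ) ≠ 0 := Nat.cast_ne_zero.2 (by omega)
  have hk1 : (k:ℂ) + 1 ≠ 0 := by
    have := Nat.cast_add_one_ne_zero (R := ℂ) k; simpa using this
  have hk2 : 2*(k:ℂ) + 1 ≠ 0 := by
    have : ((2*k+1 : ℕ) : ℂ) ≠ 0 := Nat.cast_ne_zero.2 (by omega)
    push_cast at this; exact this
  -- derivative of numerator s * w s
  have hnum : HasDerivAt (fun s => s * w s)
      (1 * w z + z * (w z / (k+1) * ((k:ℂ)/z + 2*z/(z^2 - 1)))) z :=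
    (hasDerivAt_id z).mul hw'
  -- derivative of s^2 - 1
  have hden0 : HasDerivAt (fun s : ℂ => s^2 - 1) (2*z) z := by
    simpa using ((hasDerivAt_pow 2 z).sub_const 1)
  -- derivative of (s^2-1)^2
  have hden1 : HasDerivAt (fun s : ℂ => (s^2 - 1)^2) (2 * (z^2-1)^1 * (2*z)) z :=
    hden0.pow 2
  have h1 : HasDerivAt (fun s => s * w s / (s^2 - 1)^2)
      (((1 * w z + z * (w z / (k+1) * ((k:ℂ)/z + 2*z/(z^2 - 1)))) * (z^2-1)^2
        - z * w z * (2 * (z^2-1)^1 * (2*z))) / ((z^2-1)^2)^2) z :=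
    hnum.div hden1 (pow_ne_zero 2 hzz)
  have h2 : HasDerivAt (fun s => s * w s / (s^2 - 1))
      (((1 * w z + z * (w z / (k+1) * ((k:ℂ)/z + 2*z/(z^2 - 1)))) * (z^2-1)
        - z * w z * (2*z)) / (z^2-1)^2) z :=
    hnum.div hden0 hzz
  have e1 := hd₁.unique h1
  have e2 := hd₂.unique h2
  have e1' : d₁ = w z * (((k:ℂ)+1)*(z^2-1)*(z^2-1) + ((k:ℂ)*(z^2-1) + 2*z^2)*(z^2-1)
      - 4*z^2*((k:ℂ)+1)*(z^2-1)) / (((k:ℂ)+1) * (z^2-1)^4) := by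
    rw [e1]; field_simp; ring
  have e2' : d₂ = w z * (((k:ℂ)+1)*(z^2-1) + ((k:ℂ)*(z^2-1) + 2*z^2)
      - 2*z^2*((k:ℂ)+1)) / (((k:ℂ)+1) * (z^2-1)^2) := by
    rw [e2]; field_simp
  rw [e1', e2', div_mul_div_comm, div_mul_div_comm, div_mul_div_comm]
  have h4k : (4:ℂ)*(k:ℂ) ≠ 0 := mul_ne_zero (by norm_num) hk0
  have hD0 : (4:ℂ)*(k:ℂ)*(z^2-1) ≠ 0 := mul_ne_zero h4k hzz
  have hD1 : (2*(2*(k:ℂ)+1))*(((k:ℂ)+1)*(z^2-1)^4) ≠ 0 :=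
    mul_ne_zero (mul_ne_zero two_ne_zero hk2) (mul_ne_zero hk1 (pow_ne_zero 4 hzz))
  have hD2 : (4*(k:ℂ))*(((k:ℂ)+1)*(z^2-1)^2) ≠ 0 :=
    mul_ne_zero h4k (mul_ne_zero hk1 (pow_ne_zero 2 hzz))
  rw [div_sub_div _ _ hD0 hD1, div_sub_div _ _ (mul_ne_zero hD0 hD1) hD2,
    div_eq_div_iff (pow_ne_zero 3 hzz) (mul_ne_zero (mul_ne_zero hD0 hD1) hD2)]
  ring
end

section
/- Fix an integer k ≥ 1. On the curve w^{k+1} = z^k(z² − 1), setting η₃ = w dz/(z²−1)³, one has η₃ = ((k+1)/(4k)) d(zw/(z²−1)) − (1/(4k)) · w dz/(z²−1) − ((k+1)/(2(2k+1))) d(zw/(z²−1)²). -/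
/-!
Differentiating `z w / (z² - 1)ⁿ` with the logarithmic derivative
`w'/w = (k/z + 2z/(z² - 1)) / (k + 1)` of the curve `w^{k+1} = z^k (z² - 1)` gives
`w · ((2k+1)(z² - 1) - 2(n(k+1) - 1) z²) / ((k+1)(z² - 1)^{n+1})`.
For `n = 1` and `n = 2` the numerators are `z² - (2k+1)` and `-(2k+1)(z² + 1)`, and together
with `w / (z² - 1)` they combine to `w / (z² - 1)³`.
-/

section

variable {𝕜 : Type*} [NontriviallyNormedField 𝕜]

theorem hasDerivAt_mul_div_sq_sub_one_pow {f : 𝕜 → 𝕜} {f' z : 𝕜} (hf : HasDerivAt f f' z)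
    (hz : z ^ 2 - 1 ≠ 0) (n : ℕ) :
    HasDerivAt (fun s => s * f s / (s ^ 2 - 1) ^ n)
      (((f z + z * f') * (z ^ 2 - 1) - 2 * n * z ^ 2 * f z) / (z ^ 2 - 1) ^ (n + 1)) z := by
  have hden : HasDerivAt (fun s => (s ^ 2 - 1) ^ n) (2 * n * z * (z ^ 2 - 1) ^ n / (z ^ 2 - 1)) z := by
    refine (((hasDerivAt_pow 2 z).sub_const 1).fun_pow n).congr_deriv ?_
    obtain _ | n := n
    · simp
    · rw [pow_succ (z ^ 2 - 1) n, mul_div_assoc, mul_div_cancel_right₀ _ hz]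
      push_cast
      ring
  refine (((hasDerivAt_id z).mul hf).div hden (pow_ne_zero n hz)).congr_deriv ?_
  simp only [id_eq, Pi.mul_apply]
  field_simp
  ring

theorem hasDerivAt_mul_div_sq_sub_one_pow_of_logDeriv {k z : 𝕜} {w : 𝕜 → 𝕜} (hk : k + 1 ≠ 0)
    (hz0 : z ≠ 0) (hz : z ^ 2 - 1 ≠ 0)
    (hw : HasDerivAt w (w z / (k + 1) * (k / z + 2 * z / (z ^ 2 - 1))) z) (n : ℕ) :
    HasDerivAt (fun s => s * w s / (s ^ 2 - 1) ^ n)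
      (w z * ((2 * k + 1) * (z ^ 2 - 1) - 2 * (n * (k + 1) - 1) * z ^ 2)
        / ((k + 1) * (z ^ 2 - 1) ^ (n + 1))) z := by
  refine (hasDerivAt_mul_div_sq_sub_one_pow hw hz n).congr_deriv ?_
  field_simp
  ring

end

theorem sq_sub_one_ne_zero {R : Type*} [Ring R] [NoZeroDivisors R] {z : R} (h1 : z ≠ 1)
    (hm1 : z ≠ -1) : z ^ 2 - 1 ≠ 0 := by
  rw [sub_ne_zero, Ne, sq_eq_one_iff]
  tauto

theorem stmt_8_general (k : ℕ) (hk : 1 ≤ k)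
    (z : ℂ) (hz0 : z ≠ 0) (hz1 : z ≠ 1) (hzm1 : z ≠ -1)
    (w : ℂ → ℂ)
    (hw' : HasDerivAt w (w z / (k+1) * ((k:ℂ)/z + 2*z/(z^2 - 1))) z)
    (d₁ d₂ : ℂ)
    (hd₁ : HasDerivAt (fun s => s * w s / (s^2 - 1)) d₁ z)
    (hd₂ : HasDerivAt (fun s => s * w s / (s^2 - 1)^2) d₂ z) :
    w z / (z^2 - 1)^3
      = (((k:ℂ)+1)/(4*(k:ℂ))) * d₁
        - (1/(4*(k:ℂ))) * (w z / (z^2 - 1))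
        - (((k:ℂ)+1)/(2*(2*(k:ℂ)+1))) * d₂ := by
  have hz := sq_sub_one_ne_zero hz1 hzm1
  have hk0 : (k : ℂ) ≠ 0 := Nat.cast_ne_zero.2 (by omega)
  have hk1 : (k : ℂ) + 1 ≠ 0 := Nat.cast_add_one_ne_zero k
  -- written as `field_simp` normalises `2 * k + 1`, so that it can cancel this factor
  have h2k1 : (k : ℂ) * 2 + 1 ≠ 0 := by norm_cast
  have hD := hasDerivAt_mul_div_sq_sub_one_pow_of_logDeriv hk1 hz0 hz hw'
  have e₁ : d₁ = w z * (z ^ 2 - (2 * k + 1)) / ((k + 1) * (z ^ 2 - 1) ^ 2) := by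
    have hD₁ := hD 1
    simp only [pow_one] at hD₁
    exact hd₁.unique (hD₁.congr_deriv (by push_cast; ring))
  have e₂ : d₂ = -(2 * k + 1) * w z * (z ^ 2 + 1) / ((k + 1) * (z ^ 2 - 1) ^ 3) :=
    hd₂.unique ((hD 2).congr_deriv (by push_cast; ring))
  rw [e₁, e₂]
  field_simp
  ring

theorem stmt_8 (k : ℕ) (hk : 1 ≤ k)
    (z : ℂ) (hz0 : z ≠ 0) (hz1 : z ≠ 1) (hzm1 : z ≠ -1)
    (w : ℂ → ℂ)
    (hw : w z ^ (k+1) = z^k * (z^2 - 1))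
    (hw' : HasDerivAt w (w z / (k+1) * ((k:ℂ)/z + 2*z/(z^2 - 1))) z)
    (d₁ d₂ : ℂ)
    (hd₁ : HasDerivAt (fun s => s * w s / (s^2 - 1)) d₁ z)
    (hd₂ : HasDerivAt (fun s => s * w s / (s^2 - 1)^2) d₂ z) :
    w z / (z^2 - 1)^3
      = (((k:ℂ)+1)/(4*(k:ℂ))) * d₁
        - (1/(4*(k:ℂ))) * (w z / (z^2 - 1))
        - (((k:ℂ)+1)/(2*(2*(k:ℂ)+1))) * d₂ :=
  stmt_8_general k hk z hz0 hz1 hzm1 w hw' d₁ d₂ hd₁ hd₂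
end

section
/- Fix an integer k ≥ 1. On the curve w^{k+1} = z^k(z² − 1), the 1-form η₂ = dz/(w(z² − 1)) satisfies η₂ = −dz/(2w) − ((k+1)/2) d(z/w). -/
theorem stmt_9 (k : ℕ) (hk : 1 ≤ k)
    (z : ℂ) (hz0 : z ≠ 0) (hz1 : z ≠ 1) (hzm1 : z ≠ -1)
    (w : ℂ → ℂ) (hwz : w z ≠ 0)
    (hw : w z ^ (k+1) = z^k * (z^2 - 1))
    (hw' : HasDerivAt w (w z / (k+1) * ((k:ℂ)/z + 2*z/(z^2 - 1))) z)
    (d : ℂ)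
    (hd : HasDerivAt (fun s => s / w s) d z) :
    1 / (w z * (z^2 - 1)) = -(1/(2 * w z)) - (((k:ℂ)+1)/2) * d := by
  have hz2 : z^2 - 1 ≠ 0 := by
    have h1 : z - 1 ≠ 0 := sub_ne_zero.mpr hz1
    have h2 : z + 1 ≠ 0 := by
      intro h; exact hzm1 (eq_neg_of_add_eq_zero_left h)
    have := mul_ne_zero h1 h2
    intro h; apply this; rw [← h]; ring
  have hk1 : ((k:ℂ) + 1) ≠ 0 := by exact_mod_cast Nat.succ_ne_zero k
  have hd' : HasDerivAt (fun s => s / w s)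
      ((1 * w z - z * (w z / (k+1) * ((k:ℂ)/z + 2*z/(z^2 - 1)))) / (w z)^2) z :=
    (hasDerivAt_id z).div hw' hwz
  have hdeq : d = (1 * w z - z * (w z / (k+1) * ((k:ℂ)/z + 2*z/(z^2 - 1)))) / (w z)^2 :=
    hd.unique hd'
  have hdeq2 : d = (1 - 2*z^2/(z^2-1))/(((k:ℂ)+1) * w z) := by
    rw [hdeq]; field_simp; ring
  have h3 : (((k:ℂ)+1)/2) * d = (1 - 2*z^2/(z^2-1))/(2 * w z) := by
    rw [hdeq2]; field_simp
  rw [h3]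
  field_simp
  ring
end

section
/- For real c > 0 and real x, the function Re ∫ φ₃ = (c(x²+1)/2) ln|(z−1)/(z+1)| + c(x²−1) Re(z/(z²−1)) is a well-defined single-valued real harmonic function on ℂ \ {−1, 1}; in particular the third coordinate of the minimal immersion has no periods. -/
open Real


lemma neg_mem_slit {w : ℂ} (h0 : w ≠ 0) (h : w ∉ Complex.slitPlane) :
    -w ∈ Complex.slitPlane := by
  simp only [Complex.mem_slitPlane_iff, not_or, not_lt, ne_eq, not_not] at h ⊢
  rcases h with ⟨hre, him⟩
  left
  simp only [Complex.neg_re, him]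
  rcases lt_or_eq_of_le hre with h' | h'
  · linarith
  · exact absurd (Complex.ext (by simp [← h']) (by simp [him])) h0

lemma key_deriv (c x : ℝ) (f : ℂ → ℂ)
    (hf : ∀ z : ℂ, f z = ((c:ℂ)/2) *
      ((1 - (x:ℂ)^2)/(z - 1)^2 + (1 - (x:ℂ)^2)/(z + 1)^2
        - (1 + (x:ℂ)^2)/(z + 1) + (1 + (x:ℂ)^2)/(z - 1)))
    (u : ℂ → ℝ)
    (hu : ∀ z : ℂ, u z = (c*(x^2 + 1)/2) * Real.log ‖(z - 1)/(z + 1)‖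
        + c*(x^2 - 1) * (z/(z^2 - 1)).re)
    (z : ℂ) (h1 : z ≠ 1) (h2 : z ≠ -1) :
    HasFDerivAt u (Complex.reCLM.comp
      (((1 : ℂ →L[ℂ] ℂ).smulRight (f z)).restrictScalars ℝ)) z := by
  classical
  have h1' : z - 1 ≠ 0 := sub_ne_zero.mpr h1
  have h2' : z + 1 ≠ 0 := by
    intro h; apply h2; linear_combination h
  have hz2 : z^2 - 1 ≠ 0 := by
    intro h; apply h1'
    rcases mul_eq_zero.mp (show (z-1)*(z+1) = 0 by linear_combination h) with h | h
    · exact h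
    · exact absurd h h2'
  set A : ℝ := c*(x^2+1)/2 with hA
  set B : ℝ := c*(x^2-1) with hB
  set ε₁ : ℂ := if z - 1 ∈ Complex.slitPlane then 1 else -1 with hε₁
  set ε₂ : ℂ := if z + 1 ∈ Complex.slitPlane then 1 else -1 with hε₂
  have habs1 : ‖ε₁‖ = 1 := by rw [hε₁]; split <;> simp
  have habs2 : ‖ε₂‖ = 1 := by rw [hε₂]; split <;> simp
  have hne1 : ε₁ ≠ 0 := by rw [hε₁]; split <;> simp
  have hne2 : ε₂ ≠ 0 := by rw [hε₂]; split <;> simp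
  have hs1 : ε₁ * (z - 1) ∈ Complex.slitPlane := by
    rw [hε₁]; split
    · simpa using ‹_›
    · rw [neg_one_mul]; exact neg_mem_slit h1' ‹_›
  have hs2 : ε₂ * (z + 1) ∈ Complex.slitPlane := by
    rw [hε₂]; split
    · simpa using ‹_›
    · rw [neg_one_mul]; exact neg_mem_slit h2' ‹_›
  set G : ℂ → ℂ := fun w => (A:ℂ) * Complex.log (ε₁*(w-1)) - (A:ℂ) * Complex.log (ε₂*(w+1))
      + (B:ℂ) * (w/(w^2-1)) with hG
  have hd1 : HasDerivAt (fun w : ℂ => ε₁*(w-1)) ε₁ z := by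
    simpa using ((hasDerivAt_id z).sub_const 1).const_mul ε₁
  have hd2 : HasDerivAt (fun w : ℂ => ε₂*(w+1)) ε₂ z := by
    simpa using ((hasDerivAt_id z).add_const 1).const_mul ε₂
  have hlog1 : HasDerivAt (fun w : ℂ => Complex.log (ε₁*(w-1))) ((z-1)⁻¹) z := by
    have := hd1.clog hs1
    rwa [show ε₁ / (ε₁*(z-1)) = (z-1)⁻¹ by field_simp] at this
  have hlog2 : HasDerivAt (fun w : ℂ => Complex.log (ε₂*(w+1))) ((z+1)⁻¹) z := by
    have := hd2.clog hs2
    rwa [show ε₂ / (ε₂*(z+1)) = (z+1)⁻¹ by field_simp] at this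
  have hdiv : HasDerivAt (fun w : ℂ => w/(w^2-1)) (-(z^2+1)/((z^2-1)^2)) z := by
    have := (hasDerivAt_id z).div (((hasDerivAt_id z).pow 2).sub_const 1) hz2
    refine this.congr_deriv ?_
    simp only [Pi.pow_apply, id]
    field_simp
    ring
  have hGd : HasDerivAt G (f z) z := by
    have := ((hlog1.const_mul (A:ℂ)).sub (hlog2.const_mul (A:ℂ))).add
      (hdiv.const_mul (B:ℂ))
    refine this.congr_deriv ?_
    symm
    rw [hf, hA, hB]
    have hD : (-2 + (z ^ 2 * 6 - z ^ 4 * 6) + z ^ 6 * 2 : ℂ) ≠ 0 := by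
      rw [show (-2 + (z ^ 2 * 6 - z ^ 4 * 6) + z ^ 6 * 2 : ℂ) = 2*(z^2-1)^3 by ring]
      exact mul_ne_zero two_ne_zero (pow_ne_zero _ hz2)
    push_cast
    field_simp [h1', h2', hz2]
    ring
  have hGre : HasFDerivAt (fun w => (G w).re)
      (Complex.reCLM.comp (((1 : ℂ →L[ℂ] ℂ).smulRight (f z)).restrictScalars ℝ)) z :=
    Complex.reCLM.hasFDerivAt.comp z (hGd.hasFDerivAt.restrictScalars ℝ)
  apply hGre.congr_of_eventuallyEq
  have hopen : IsOpen {w : ℂ | w ≠ 1 ∧ w ≠ -1} := isOpen_ne.and isOpen_ne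
  filter_upwards [hopen.mem_nhds ⟨h1, h2⟩] with w ⟨hw1, hw2⟩
  have hw1' : w - 1 ≠ 0 := sub_ne_zero.mpr hw1
  have hw2' : w + 1 ≠ 0 := by intro h; apply hw2; linear_combination h
  rw [hu, hG]
  simp only [Complex.add_re, Complex.sub_re, Complex.re_ofReal_mul, Complex.log_re, map_mul,
    map_div₀, norm_mul, norm_div, habs1, habs2, one_mul]
  rw [Real.log_div (norm_ne_zero_iff.mpr hw1') (norm_ne_zero_iff.mpr hw2')]
  ring

lemma diff_f (c x : ℝ) (f : ℂ → ℂ)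
    (hf : ∀ z : ℂ, f z = ((c:ℂ)/2) *
      ((1 - (x:ℂ)^2)/(z - 1)^2 + (1 - (x:ℂ)^2)/(z + 1)^2
        - (1 + (x:ℂ)^2)/(z + 1) + (1 + (x:ℂ)^2)/(z - 1)))
    (z : ℂ) (h1 : z ≠ 1) (h2 : z ≠ -1) : DifferentiableAt ℂ f z := by
  have h1' : z - 1 ≠ 0 := sub_ne_zero.mpr h1
  have h2' : z + 1 ≠ 0 := by intro h; apply h2; linear_combination h
  rw [funext hf]
  have d1 : DifferentiableAt ℂ (fun w : ℂ => (1 - (x:ℂ)^2)/(w - 1)^2) z :=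
    (differentiableAt_const _).div
      ((differentiableAt_id.sub (differentiableAt_const 1)).pow 2) (pow_ne_zero 2 h1')
  have d2 : DifferentiableAt ℂ (fun w : ℂ => (1 - (x:ℂ)^2)/(w + 1)^2) z :=
    (differentiableAt_const _).div
      ((differentiableAt_id.add (differentiableAt_const 1)).pow 2) (pow_ne_zero 2 h2')
  have d3 : DifferentiableAt ℂ (fun w : ℂ => (1 + (x:ℂ)^2)/(w + 1)) z :=
    (differentiableAt_const _).div
      (differentiableAt_id.add (differentiableAt_const 1)) h2'
  have d4 : DifferentiableAt ℂ (fun w : ℂ => (1 + (x:ℂ)^2)/(w - 1)) z :=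
    (differentiableAt_const _).div
      (differentiableAt_id.sub (differentiableAt_const 1)) h1'
  exact (((d1.add d2).sub d3).add d4).const_mul _

theorem stmt_10 (c x : ℝ) (hc : 0 < c)
    (f : ℂ → ℂ)
    (hf : ∀ z : ℂ, f z = ((c:ℂ)/2) *
      ((1 - (x:ℂ)^2)/(z - 1)^2 + (1 - (x:ℂ)^2)/(z + 1)^2
        - (1 + (x:ℂ)^2)/(z + 1) + (1 + (x:ℂ)^2)/(z - 1)))
    (u : ℂ → ℝ)
    (hu : ∀ z : ℂ, u z = (c*(x^2 + 1)/2) * Real.log ‖(z - 1)/(z + 1)‖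
        + c*(x^2 - 1) * (z/(z^2 - 1)).re) :
    (∀ z : ℂ, z ≠ 1 → z ≠ -1 →
      fderiv ℝ (fun y => fderiv ℝ u y 1) z 1
        + fderiv ℝ (fun y => fderiv ℝ u y Complex.I) z Complex.I = 0) ∧
    (∀ γ : ℝ → ℂ, ContDiff ℝ 1 γ → (∀ t, γ t ≠ 1 ∧ γ t ≠ -1) →
      (∫ t in (0:ℝ)..1, (f (γ t) * deriv γ t).re) = u (γ 1) - u (γ 0)) := by

  have key := key_deriv c x f hf u hu
  have hopen : IsOpen {w : ℂ | w ≠ 1 ∧ w ≠ -1} := isOpen_ne.and isOpen_ne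
  constructor
  · intro z hz1 hz2
    have hdiff : DifferentiableAt ℂ f z := diff_f c x f hf z hz1 hz2
    have hd : HasDerivAt f (deriv f z) z := hdiff.hasDerivAt
    set d := deriv f z with hdd
    have e1 : (fun y => fderiv ℝ u y 1) =ᶠ[nhds z] fun y => (f y).re := by
      filter_upwards [hopen.mem_nhds ⟨hz1, hz2⟩] with y hy
      rw [(key y hy.1 hy.2).fderiv]
      simp
    have e2 : (fun y => fderiv ℝ u y Complex.I) =ᶠ[nhds z]
        fun y => (Complex.I * f y).re := by
      filter_upwards [hopen.mem_nhds ⟨hz1, hz2⟩] with y hy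
      rw [(key y hy.1 hy.2).fderiv]
      simp
    rw [e1.fderiv_eq, e2.fderiv_eq]
    have h1 : HasFDerivAt (fun y => (f y).re)
        (Complex.reCLM.comp (((1 : ℂ →L[ℂ] ℂ).smulRight d).restrictScalars ℝ)) z :=
      Complex.reCLM.hasFDerivAt.comp z (hd.hasFDerivAt.restrictScalars ℝ)
    have h2 : HasFDerivAt (fun y => (Complex.I * f y).re)
        (Complex.reCLM.comp (((1 : ℂ →L[ℂ] ℂ).smulRight (Complex.I * d)).restrictScalars ℝ)) z :=
      Complex.reCLM.hasFDerivAt.comp z ((hd.const_mul Complex.I).hasFDerivAt.restrictScalars ℝ)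
    rw [h1.fderiv, h2.fderiv]
    simp only [ContinuousLinearMap.coe_comp', Function.comp_apply,
      ContinuousLinearMap.coe_restrictScalars', ContinuousLinearMap.smulRight_apply,
      ContinuousLinearMap.one_apply, smul_eq_mul, one_mul, Complex.reCLM_apply]
    rw [show Complex.I * (Complex.I * d) = -d by rw [← mul_assoc, Complex.I_mul_I]; ring]
    simp
  · intro γ hγ hne
    have hd : ∀ t : ℝ, HasDerivAt (fun s => u (γ s)) ((f (γ t) * deriv γ t).re) t := by
      intro t
      have hγt : HasDerivAt γ (deriv γ t) t :=
        ((hγ.differentiable one_ne_zero) t).hasDerivAt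
      have h := (key (γ t) (hne t).1 (hne t).2).comp_hasDerivAt t hγt
      have h' : HasDerivAt (fun s => u (γ s))
          ((Complex.reCLM.comp (((1 : ℂ →L[ℂ] ℂ).smulRight (f (γ t))).restrictScalars ℝ))
            (deriv γ t)) t := h
      convert h' using 1
      simp only [ContinuousLinearMap.coe_comp', Function.comp_apply,
        ContinuousLinearMap.coe_restrictScalars', ContinuousLinearMap.smulRight_apply,
        ContinuousLinearMap.one_apply, smul_eq_mul, Complex.reCLM_apply]
      rw [mul_comm]
    have hcont : Continuous fun t => (f (γ t) * deriv γ t).re := by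
      apply Complex.continuous_re.comp
      apply Continuous.mul _ (hγ.continuous_deriv le_rfl)
      rw [continuous_iff_continuousAt]
      intro t
      exact (diff_f c x f hf (γ t) (hne t).1 (hne t).2).continuousAt.comp
        hγ.continuous.continuousAt
    exact intervalIntegral.integral_eq_sub_of_hasDerivAt (fun t _ => hd t)
      (hcont.intervalIntegrable 0 1)
end
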